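/- arXiv:2602.15316 — 3 statements merged into one kernel-verified Lean document; each statement's English description precedes it below -/
import Mathlib

section
/- Let 𝕜 be a field with a primitive n-th root of unity ζ. For a k-element subset {i_1 < … < i_k} ⊆ {0,…,n-1}, let M be the k×n matrix whose a-th row is v_{i_a} = (1, ζ^{i_a}, …, ζ^{(n-1)i_a}). Then for every r ∈ ℤ, the k×k minor of M on the cyclically consecutive columns r+1, r+2, …, r+k (column indices mod n) equals ζ^{(r)(i_1+⋯+i_k)} · ∏_{a<b} (ζ^{i_b} − ζ^{i_a}), and in particular is nonzero. -/
theorem stmt_5 (n k : ℕ) (hn : 0 < n) (𝕜 : Type*) [Field 𝕜] (ζ : 𝕜)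
    (hζ : IsPrimitiveRoot ζ n)
    (i : Fin k → ℕ) (hmono : StrictMono i) (hlt : ∀ a, i a < n) (r : ℤ) :
    Matrix.det (Matrix.of fun a b : Fin k => ζ ^ ((i a : ℤ) * (r + (b : ℕ))))
      = ζ ^ (r * ∑ a, (i a : ℤ)) *
        ∏ b : Fin k, ∏ a ∈ Finset.Iio b, (ζ ^ (i b : ℤ) - ζ ^ (i a : ℤ)) ∧
    Matrix.det (Matrix.of fun a b : Fin k => ζ ^ ((i a : ℤ) * (r + (b : ℕ)))) ≠ 0 := by
  have hz : ζ ≠ 0 := hζ.ne_zero hn.ne'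
  have hprod : (∏ b : Fin k, ∏ a ∈ Finset.Iio b, (ζ ^ (i b : ℤ) - ζ ^ (i a : ℤ))) ≠ 0 := by
    apply Finset.prod_ne_zero_iff.2
    intro b _
    apply Finset.prod_ne_zero_iff.2
    intro a ha
    rw [Finset.mem_Iio] at ha
    rw [sub_ne_zero, zpow_natCast, zpow_natCast]
    intro H
    exact absurd (hζ.pow_inj (hlt b) (hlt a) H) (hmono ha).ne'
  have hswap : (∏ b : Fin k, ∏ a ∈ Finset.Iio b, (ζ ^ (i b : ℤ) - ζ ^ (i a : ℤ)))
      = ∏ a : Fin k, ∏ b ∈ Finset.Ioi a, (ζ ^ (i b : ℤ) - ζ ^ (i a : ℤ)) := by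
    rw [Finset.prod_sigma', Finset.prod_sigma']
    apply Finset.prod_nbij' (fun p => ⟨p.2, p.1⟩) (fun p => ⟨p.2, p.1⟩) <;>
      simp [Finset.mem_Iio, Finset.mem_Ioi]
  have key : Matrix.det (Matrix.of fun a b : Fin k => ζ ^ ((i a : ℤ) * (r + (b : ℕ))))
      = ζ ^ (r * ∑ a, (i a : ℤ)) *
        ∏ b : Fin k, ∏ a ∈ Finset.Iio b, (ζ ^ (i b : ℤ) - ζ ^ (i a : ℤ)) := by
    have h1 : (Matrix.of fun a b : Fin k => ζ ^ ((i a : ℤ) * (r + (b : ℕ))))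
        = Matrix.of fun a b : Fin k => ζ ^ ((i a : ℤ) * r) *
            Matrix.vandermonde (fun a => ζ ^ (i a : ℤ)) a b := by
      ext a b
      simp only [Matrix.of_apply, Matrix.vandermonde_apply]
      rw [← zpow_natCast (ζ ^ ((i a : ℤ))) b, ← zpow_mul, ← zpow_add₀ hz, mul_add]
    rw [h1, Matrix.det_mul_column, Matrix.det_vandermonde, hswap]
    congr 1
    rw [mul_comm r]
    have hzs : ∀ (s : Finset (Fin k)) (f : Fin k → ℤ),
        ∏ a ∈ s, ζ ^ f a = ζ ^ (∑ a ∈ s, f a) := by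
      intro s f
      induction s using Finset.induction_on with
      | empty => simp
      | insert _ _ h ih => rw [Finset.prod_insert h, Finset.sum_insert h, ih, zpow_add₀ hz]
    rw [hzs]
    congr 1
    exact (Finset.sum_mul ..).symm
  exact ⟨key, key ▸ mul_ne_zero (zpow_ne_zero _ hz) hprod⟩
end

section
/- Let 𝕜 be a field with primitive n-th root of unity ζ, and for I ⊆ ℤ/nℤ of size k let V_I = span{v_i : i ∈ I} where v_i = (1, ζ^i, …, ζ^{(n-1)i}). If t = diag(t_1,…,t_n) is an invertible diagonal matrix with t·V_I = V_J for two k-element subsets I, J ⊆ ℤ/nℤ, then J = I + m for some m ∈ ℤ/nℤ (i.e., J is a cyclic rotation of I). -/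
theorem stmt_8 (n k : ℕ) [NeZero n] (𝕜 : Type*) [Field 𝕜] (ζ : 𝕜)
    (hζ : IsPrimitiveRoot ζ n)
    (v : ZMod n → ZMod n → 𝕜) (hv : ∀ i j : ZMod n, v i j = ζ ^ (i * j).val)
    (t : ZMod n → 𝕜ˣ)
    (D : (ZMod n → 𝕜) →ₗ[𝕜] (ZMod n → 𝕜))
    (hD : ∀ (x : ZMod n → 𝕜) (j : ZMod n), D x j = (t j : 𝕜) * x j)
    (I J : Finset (ZMod n)) (hI : I.card = k) (hJ : J.card = k)
    (h : (Submodule.span 𝕜 (v '' I)).map D = Submodule.span 𝕜 (v '' J)) :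
    ∃ m : ZMod n, J = I.image (· + m) := by
  have hζn : ζ ^ n = 1 := hζ.pow_eq_one
  have hpow : ∀ x : ℕ, ζ ^ (x % n) = ζ ^ x := by
    intro x
    conv_rhs => rw [← Nat.div_add_mod x n]
    rw [pow_add, pow_mul, hζn, one_pow, one_mul]
  have hmul : ∀ a b j : ZMod n, v a j * v b j = v (a + b) j := by
    intro a b j
    rw [hv, hv, hv, ← pow_add, add_mul, ZMod.val_add, hpow]
  -- the equivalence Fin n ≃ ZMod n
  let e : Fin n ≃ ZMod n :=
    { toFun := fun a => ((a : ℕ) : ZMod n)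
      invFun := fun z => ⟨z.val, z.val_lt⟩
      left_inv := fun a => Fin.ext (ZMod.val_cast_of_lt a.isLt)
      right_inv := fun z => ZMod.natCast_rightInverse z }
  -- linear independence of v
  have hli : LinearIndependent 𝕜 v := by
    have hsub : (Matrix.of v).submatrix e e
        = Matrix.vandermonde (fun a : Fin n => ζ ^ (a : ℕ)) := by
      ext a b
      have hea : (((a : ℕ) : ZMod n)).val = (a : ℕ) := ZMod.val_cast_of_lt a.isLt
      have heb : (((b : ℕ) : ZMod n)).val = (b : ℕ) := ZMod.val_cast_of_lt b.isLt
      simp only [Matrix.submatrix_apply, Matrix.of_apply, Matrix.vandermonde_apply, e,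
        Equiv.coe_fn_mk]
      rw [hv, ZMod.val_mul, hpow, hea, heb, pow_mul]
    have hdet : (Matrix.of v).det ≠ 0 := by
      rw [← Matrix.det_submatrix_equiv_self e (Matrix.of v), hsub]
      rw [Matrix.det_vandermonde_ne_zero_iff]
      intro a b hab
      exact Fin.ext (hζ.pow_inj a.isLt b.isLt hab)
    have : LinearIndependent 𝕜 (fun i => (Matrix.of v) i) :=
      Matrix.linearIndependent_rows_iff_isUnit.mpr
        ((Matrix.isUnit_iff_isUnit_det _).mpr (isUnit_iff_ne_zero.mpr hdet))
    exact this
  -- basis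
  have hcard : Fintype.card (ZMod n) = Module.finrank 𝕜 (ZMod n → 𝕜) := by
    rw [Module.finrank_pi]
  let B : Module.Basis (ZMod n) 𝕜 (ZMod n → 𝕜) :=
    basisOfLinearIndependentOfCardEqFinrank hli hcard
  have hB : ⇑B = v := coe_basisOfLinearIndependentOfCardEqFinrank hli hcard
  -- expand t in the basis
  set t' : ZMod n → 𝕜 := fun j => (t j : 𝕜) with ht'
  set c : ZMod n →₀ 𝕜 := B.repr t' with hc
  have hct : ∑ m, c m • v m = t' := by rw [← hB]; exact B.sum_repr t'
  have hcne : c ≠ 0 := by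
    intro hc0
    have : t' = 0 := by
      have := B.repr.injective (a₁ := t') (a₂ := 0) (by rw [← hc, hc0, map_zero])
      exact this
    have h0 : t' 0 = 0 := by rw [this]; rfl
    exact (t 0).ne_zero h0
  obtain ⟨m₀, hm₀⟩ : ∃ m, c m ≠ 0 := by
    by_contra hall
    push_neg at hall
    exact hcne (Finsupp.ext hall)
  -- key: for each i ∈ I, i + m₀ ∈ J
  have key : ∀ i ∈ I, i + m₀ ∈ J := by
    intro i hi
    have hvi : v i ∈ Submodule.span 𝕜 (v '' I) :=
      Submodule.subset_span ⟨i, hi, rfl⟩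
    have hDvi : D (v i) ∈ Submodule.span 𝕜 (v '' J) := by
      rw [← h]; exact Submodule.mem_map_of_mem hvi
    -- compute D (v i)
    have hDeq : D (v i) = ∑ m', (fun m' => c (m' - i)) m' • v m' := by
      have h1 : D (v i) = ∑ m, c m • v (m + i) := by
        funext j
        have htj : (t j : 𝕜) = (∑ m, c m • v m) j := by rw [hct]
        rw [hD, htj]
        simp only [Finset.sum_apply, Pi.smul_apply, smul_eq_mul, Finset.sum_mul]
        refine Finset.sum_congr rfl fun m _ => ?_
        rw [mul_assoc, hmul]
      rw [h1]
      exact Fintype.sum_equiv (Equiv.addRight i) _ _ (fun m => by simp)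
    have hrepr : B.repr (D (v i)) (i + m₀) = c m₀ := by
      have := B.repr_sum_self (fun m' => c (m' - i))
      rw [hDeq]
      simp only [← hB]
      rw [congrFun this (i + m₀)]
      simp
    have hsupp : ↑(B.repr (D (v i))).support ⊆ (↑J : Set (ZMod n)) := by
      rw [← Module.Basis.mem_span_image, hB]
      exact hDvi
    have : (i + m₀) ∈ (B.repr (D (v i))).support := by
      rw [Finsupp.mem_support_iff, hrepr]; exact hm₀
    exact hsupp this
  refine ⟨m₀, ?_⟩
  have hsub : I.image (· + m₀) ⊆ J := by
    intro x hx
    obtain ⟨i, hi, rfl⟩ := Finset.mem_image.mp hx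
    exact key i hi
  have hcard2 : (I.image (· + m₀)).card = I.card :=
    Finset.card_image_of_injective _ (add_left_injective m₀)
  exact (Finset.eq_of_subset_of_card_le hsub (by rw [hcard2, hI, hJ])).symm
end

section
/- Let q be a prime power and let v_1, …, v_k ∈ 𝔽_{q^n}. The Moore matrix M with entries M_{i,j} = v_i^{q^{j-1}} (1 ≤ i, j ≤ k) has determinant zero if and only if v_1, …, v_k are linearly dependent over 𝔽_q. -/
open Polynomial Finset

theorem stmt_13 (F K : Type*) [Field F] [Fintype F] [Field K] [Fintype K] [Algebra F K]
    (n : ℕ) (hn : 0 < n) (hcard : Fintype.card K = Fintype.card F ^ n)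
    (k : ℕ) (v : Fin k → K) :
    Matrix.det (Matrix.of fun i j : Fin k => v i ^ (Fintype.card F ^ (j : ℕ))) = 0 ↔
      ¬ LinearIndependent F v := by
  classical
  rcases Nat.eq_zero_or_pos k with rfl | hk
  · simp [Matrix.det_fin_zero, linearIndependent_empty_type]
  set q := Fintype.card F with hqdef
  have hq1 : 1 < q := Fintype.one_lt_card
  obtain ⟨p, hpF⟩ := CharP.exists F
  haveI : CharP F p := hpF
  obtain ⟨m, hpprime, hqm⟩ := FiniteField.card F p
  haveI : Fact p.Prime := ⟨hpprime⟩
  haveI : CharP K p := charP_of_injective_algebraMap (algebraMap F K).injective p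
  haveI : ExpChar K p := ExpChar.prime hpprime
  -- Key: Frobenius q^e is additive and fixes F
  have hA : ∀ (e : ℕ) (g : Fin k → F),
      (∑ i, algebraMap F K (g i) * v i) ^ q ^ e
        = ∑ i, algebraMap F K (g i) * v i ^ q ^ e := by
    intro e g
    have h1 : q ^ e = p ^ ((m : ℕ) * e) := by rw [hqdef, hqm, ← pow_mul]
    have h2 := map_sum (iterateFrobenius K p ((m : ℕ) * e))
      (fun i => algebraMap F K (g i) * v i) Finset.univ
    simp only [iterateFrobenius_def, mul_pow] at h2
    rw [h1, h2]
    refine Finset.sum_congr rfl fun i _ => ?_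
    congr 1
    rw [← map_pow, ← h1, FiniteField.pow_card_pow]
  constructor
  · -- det = 0 → dependent
    intro hdet
    by_contra hli
    obtain ⟨x, hx0, hxM⟩ := Matrix.exists_mulVec_eq_zero_iff.mpr hdet
    -- the q-polynomial
    set P : K[X] := ∑ j : Fin k, C (x j) * X ^ (q ^ (j : ℕ)) with hP
    have hqinj : Function.Injective fun j : ℕ => q ^ j :=
      fun a b h => Nat.pow_right_injective hq1 h
    have hPne : P ≠ 0 := by
      obtain ⟨j₀, hj₀⟩ := Function.ne_iff.mp hx0
      intro h
      apply hj₀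
      have := congrArg (fun Q => Polynomial.coeff Q (q ^ (j₀ : ℕ))) h
      simpa [hP, Polynomial.finset_sum_coeff, Polynomial.coeff_C_mul,
        Polynomial.coeff_X_pow, hqinj.eq_iff, Fin.val_eq_val,
        Finset.sum_ite_eq' Finset.univ j₀ x] using this
    -- every element of the span is a root
    have hroot : ∀ w ∈ Submodule.span F (Set.range v), P.eval w = 0 := by
      intro w hw
      obtain ⟨g, rfl⟩ := (Submodule.mem_span_range_iff_exists_fun F).mp hw
      have hsmul : (∑ i, g i • v i) = ∑ i, algebraMap F K (g i) * v i := by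
        simp [Algebra.smul_def]
      rw [hsmul]
      have : P.eval (∑ i, algebraMap F K (g i) * v i)
          = ∑ j : Fin k, x j * (∑ i, algebraMap F K (g i) * v i) ^ q ^ (j : ℕ) := by
        simp [hP, Polynomial.eval_finset_sum]
      rw [this]
      have hswap : ∑ j : Fin k, x j * ∑ i, algebraMap F K (g i) * v i ^ q ^ (j : ℕ)
          = ∑ i, algebraMap F K (g i) * ∑ j : Fin k, v i ^ q ^ (j : ℕ) * x j := by
        simp only [Finset.mul_sum]
        rw [Finset.sum_comm]
        exact Finset.sum_congr rfl fun i _ => Finset.sum_congr rfl fun j _ => by ring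
      simp only [hA]
      rw [hswap]
      have : ∀ i, ∑ j : Fin k, v i ^ q ^ (j : ℕ) * x j = 0 := by
        intro i
        have := congrFun hxM i
        simpa [Matrix.mulVec, dotProduct] using this
      simp [this]
    -- counting
    set S := Submodule.span F (Set.range v)
    have hfin : Module.finrank F S = k := by
      rw [finrank_span_eq_card hli, Fintype.card_fin]
    have hcardS : Fintype.card S = q ^ k := by
      rw [Module.card_eq_pow_finrank (K := F) (V := S), hfin]
    have hdeg : P.natDegree ≤ q ^ (k - 1) := by
      refine Polynomial.natDegree_sum_le_of_forall_le _ _ fun j _ => ?_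
      refine (Polynomial.natDegree_C_mul_X_pow_le _ _).trans ?_
      exact Nat.pow_le_pow_right (le_of_lt hq1) (Nat.le_pred_of_lt j.isLt)
    have hsub : (Finset.univ.image (fun s : S => (s : K))) ⊆ P.roots.toFinset := by
      intro w hw
      obtain ⟨s, _, rfl⟩ := Finset.mem_image.mp hw
      rw [Multiset.mem_toFinset, Polynomial.mem_roots hPne]
      exact hroot s s.2
    have h1 : Fintype.card S ≤ P.roots.toFinset.card := by
      rw [← Finset.card_univ, ← Finset.card_image_of_injective Finset.univ
        (Subtype.val_injective : Function.Injective (fun s : S => (s : K)))]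
      exact Finset.card_le_card hsub
    have h2 : P.roots.toFinset.card ≤ P.natDegree :=
      (Multiset.toFinset_card_le _).trans (Polynomial.card_roots' P)
    have : q ^ k ≤ q ^ (k - 1) := hcardS ▸ (h1.trans (h2.trans hdeg))
    exact absurd this (not_le.mpr (Nat.pow_lt_pow_right hq1 (Nat.pred_lt hk.ne')))
  · -- dependent → det = 0
    intro hli
    obtain ⟨g, hg, i₀, hi₀⟩ := Fintype.not_linearIndependent_iff.mp hli
    rw [← Matrix.exists_vecMul_eq_zero_iff]
    refine ⟨fun i => algebraMap F K (g i), ?_, ?_⟩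
    · intro h
      exact hi₀ ((map_eq_zero_iff _ (algebraMap F K).injective).mp (congrFun h i₀))
    · funext j
      have hg' : ∑ i, algebraMap F K (g i) * v i = 0 := by
        rw [← hg]; exact Finset.sum_congr rfl fun i _ => (Algebra.smul_def _ _).symm
      have := hA (j : ℕ) g
      rw [hg', zero_pow (pow_ne_zero _ (Nat.ne_zero_of_lt hq1))] at this
      simpa [Matrix.vecMul, dotProduct, mul_comm] using this.symm
end
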